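/- Every connected graph on n vertices is a ⌈n/2⌉-simulated tree: there exists a partition of the vertex set into connected parts, each of size at most ⌈n/2⌉, such that the quotient graph induced on the parts is a tree. -/

import Mathlib

open SimpleGraph

section Helpers

variable {V : Type*}

private lemma my_induce_singleton_connected (G : SimpleGraph V) (v : V) :
    (G.induce ({v} : Set V)).Connected := by
  haveI : Nonempty ({v} : Set V) := ⟨⟨v, rfl⟩⟩
  refine ⟨fun a b => ?_⟩
  have : a = b := Subtype.ext (a.2.trans b.2.symm)
  exact this ▸ Reachable.refl _

/-- A graph in which every edge is incident to a fixed vertex `v₀`, i.e. a "star", is a tree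
(provided adjacency is exactly: distinct and one endpoint is `v₀`). -/
private lemma my_star_isTree {α : Type*} (G : SimpleGraph α) (v₀ : α)
    (hadj : ∀ a b : α, G.Adj a b ↔ a ≠ b ∧ (a = v₀ ∨ b = v₀)) : G.IsTree := by
  constructor
  · haveI : Nonempty α := ⟨v₀⟩
    refine ⟨fun a b => ?_⟩
    have key : ∀ c : α, G.Reachable c v₀ := by
      intro c
      by_cases hc : c = v₀
      · exact hc ▸ Reachable.refl _
      · exact Adj.reachable ((hadj c v₀).mpr ⟨hc, Or.inr rfl⟩)
    exact (key a).trans (key b).symm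
  · intro u c hc
    have h3 := hc.three_le_length
    cases c with
    | nil => simp at h3
    | @cons _ v _ h₁ p =>
      cases p with
      | nil => simp at h3
      | @cons _ w _ h₂ q =>
        cases q with
        | nil => simp [Walk.length_cons] at h3
        | @cons _ x _ h₃ r =>
          have hnd := hc.support_nodup
          simp only [Walk.support_cons, List.tail_cons, List.nodup_cons] at hnd
          obtain ⟨hv1, hw1, -⟩ := hnd
          rw [hadj] at h₁ h₂ h₃
          by_cases hv : v = v₀
          · have hw : w ≠ v₀ := fun hw => h₂.1 (hv.trans hw.symm)
            have hx : x = v₀ := (h₃.2).resolve_left hw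
            exact hv1 (by
              rw [show v = x from hv.trans hx.symm]
              exact List.mem_cons_of_mem _ (Walk.start_mem_support r))
          · have hu : u = v₀ := (h₁.2).resolve_right hv
            have hw : w = v₀ := (h₂.2).resolve_left hv
            exact hw1 (by
              rw [show w = u from hw.trans hu.symm]
              exact Walk.end_mem_support r)

/-- Greedy growth: a connected graph has a connected induced subgraph of every size up to `n`. -/
private lemma my_exists_connected_finset [Fintype V] (G : SimpleGraph V) (hG : G.Connected) :
    ∀ m : ℕ, 1 ≤ m → m ≤ Fintype.card V →
      ∃ s : Finset V, s.card = m ∧ (G.induce (s : Set V)).Connected := by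
  classical
  intro m
  induction m with
  | zero => omega
  | succ k ih =>
    intro _ hle
    by_cases hk : 1 ≤ k
    · obtain ⟨s, hcard, hconn⟩ := ih hk (by omega)
      have hex : ∃ v, v ∉ s := by
        by_contra h
        push_neg at h
        have : s = Finset.univ := Finset.eq_univ_iff_forall.mpr h
        rw [this, Finset.card_univ] at hcard
        omega
      obtain ⟨v, hv⟩ := hex
      have hvK : v ∉ (s : Set V) := by simpa using hv
      have hsne : (s : Set V).Nonempty := by
        rw [Finset.coe_nonempty, ← Finset.card_pos]
        omega
      obtain ⟨⟨c, kk⟩, hcC, hkK, hadj⟩ :=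
        ComponentCompl.exists_adj_boundary_pair hG.preconnected hsne
          (G.componentComplMk hvK)
      have hcK : c ∉ (s : Set V) := ComponentCompl.notMem_of_mem hcC
      have hcs : c ∉ s := by simpa using hcK
      refine ⟨insert c s, ?_, ?_⟩
      · rw [Finset.card_insert_of_notMem hcs, hcard]
      · have := connected_induce_union (G := G) hconn.preconnected
          (my_induce_singleton_connected G c).preconnected hkK rfl hadj.symm
        have hset : (s : Set V) ∪ {c} = ((insert c s : Finset V) : Set V) := by
          rw [Finset.coe_insert, Set.union_singleton]
        rwa [hset] at this
    · have hk0 : k = 0 := by omega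
      subst hk0
      have : Nonempty V := hG.nonempty
      obtain ⟨v⟩ := this
      exact ⟨{v}, by simp, by rw [Finset.coe_singleton]; exact my_induce_singleton_connected G v⟩

private lemma my_reachable_in_supp {G : SimpleGraph V} {K : Set V} {C : G.ComponentCompl K}
    {a b : ↥(Kᶜ)} (p : (G.induce (Kᶜ)).Walk a b) :
    ∀ (ha : (a : V) ∈ C) (hb : (b : V) ∈ C),
      (G.induce (C : Set V)).Reachable ⟨a, ha⟩ ⟨b, hb⟩ := by
  induction p with
  | nil => intro ha hb; exact Reachable.refl _
  | @cons x y z h q ih =>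
    intro ha hb
    have hadj : G.Adj (x : V) (y : V) := h
    have hy : (y : V) ∈ C := ComponentCompl.mem_of_adj (x : V) (y : V) ha y.2 hadj
    have hstep : (G.induce (C : Set V)).Adj ⟨x, ha⟩ ⟨y, hy⟩ := hadj
    exact (Adj.reachable hstep).trans (ih hy hb)

private lemma my_componentCompl_supp_connected {G : SimpleGraph V} {K : Set V}
    (C : G.ComponentCompl K) : (G.induce (C : Set V)).Connected := by
  obtain ⟨v, hvK, hveq⟩ := C.exists_eq_mk
  haveI : Nonempty (C : Set V) := ⟨⟨v, hveq ▸ G.componentComplMk_mem hvK⟩⟩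
  refine ⟨fun a b => ?_⟩
  obtain ⟨haK, haeq⟩ := a.2
  obtain ⟨hbK, hbeq⟩ := b.2
  have hr : (G.induce (Kᶜ)).Reachable ⟨(a : V), haK⟩ ⟨(b : V), hbK⟩ :=
    (ConnectedComponent.eq).mp (haeq.trans hbeq.symm)
  obtain ⟨p⟩ := hr
  exact my_reachable_in_supp p a.2 b.2

end Helpers

/-- Every finite connected graph on `n` vertices is a
`⌈n/2⌉`-simulated tree: there is a tree `T` and a surjective map `f` from the
vertices of `G` onto the vertices of `T` such that adjacent vertices of `G` map
to equal or adjacent vertices of `T`, every fiber has size at most `⌈n/2⌉`, and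
every fiber induces a connected subgraph of `G`. -/
theorem connected_graph_is_half_n_simulated_tree
    {V : Type*} [Fintype V] (G : SimpleGraph V) (hG : G.Connected) :
    ∃ (W : Type) (_ : Fintype W) (T : SimpleGraph W) (f : V → W),
      T.IsTree ∧
      Function.Surjective f ∧
      (∀ x y : V, G.Adj x y → f x = f y ∨ T.Adj (f x) (f y)) ∧
      (∀ w : W, Nat.card (f ⁻¹' {w}) ≤ (Fintype.card V + 1) / 2) ∧
      (∀ w : W, (G.induce (f ⁻¹' {w})).Connected) := by
  classical
  have hnV : Nonempty V := hG.nonempty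
  have hn1 : 1 ≤ Fintype.card V := Fintype.card_pos
  set n := Fintype.card V with hn
  obtain ⟨B, hBcard, hBconn⟩ :=
    my_exists_connected_finset G hG ((n + 1) / 2) (by omega) (by omega)
  set K : Set V := (B : Set V) with hK
  obtain ⟨N, ⟨e⟩⟩ := Finite.exists_equiv_fin (Option (G.ComponentCompl K))
  set f : V → Fin N := fun v =>
    if h : v ∈ K then e none else e (some (G.componentComplMk h)) with hf
  set T : SimpleGraph (Fin N) := SimpleGraph.fromRel (fun a _ => a = e none) with hT
  have hTadj : ∀ a b : Fin N, T.Adj a b ↔ a ≠ b ∧ (a = e none ∨ b = e none) := by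
    intro a b
    rw [hT, SimpleGraph.fromRel_adj]
  -- fibers
  have hfib_none : f ⁻¹' {e none} = K := by
    ext v
    by_cases h : v ∈ K <;> simp [hf, h, e.injective.eq_iff]
  have hfib_some : ∀ C : G.ComponentCompl K, f ⁻¹' {e (some C)} = (C : Set V) := by
    intro C
    ext v
    by_cases h : v ∈ K
    · simp only [Set.mem_preimage, Set.mem_singleton_iff, hf, dif_pos h,
        e.injective.eq_iff]
      constructor
      · intro hcon; exact absurd hcon (by simp)
      · rintro ⟨h', -⟩; exact absurd h h'
    · simp only [Set.mem_preimage, Set.mem_singleton_iff, hf, dif_neg h,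
        e.injective.eq_iff, Option.some_inj]
      constructor
      · intro h'; exact ⟨h, h'⟩
      · rintro ⟨h', hh⟩; exact hh
  have hfib : ∀ w : Fin N, f ⁻¹' {w} = K ∨
      ∃ C : G.ComponentCompl K, f ⁻¹' {w} = (C : Set V) := by
    intro w
    obtain ⟨o, rfl⟩ := e.surjective w
    cases o with
    | none => exact Or.inl hfib_none
    | some C => exact Or.inr ⟨C, hfib_some C⟩
  refine ⟨Fin N, inferInstance, T, f, ?_, ?_, ?_, ?_, ?_⟩
  · -- tree
    refine my_star_isTree T (e none) hTadj
  · -- surjective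
    intro w
    obtain ⟨o, rfl⟩ := e.surjective w
    cases o with
    | none =>
      have : B.Nonempty := by rw [← Finset.card_pos]; omega
      obtain ⟨v, hv⟩ := this
      exact ⟨v, by simp [hf, dif_pos (show v ∈ K from hv)]⟩
    | some C =>
      obtain ⟨v, hvK, hveq⟩ := C.exists_eq_mk
      refine ⟨v, ?_⟩
      simp only [hf, dif_neg hvK]
      exact congrArg e (congrArg some hveq)
  · -- homomorphism-like condition
    intro x y hxy
    by_cases hx : x ∈ K <;> by_cases hy : y ∈ K
    · exact Or.inl (by simp [hf, dif_pos hx, dif_pos hy])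
    · refine Or.inr ((hTadj _ _).mpr ⟨?_, Or.inl ?_⟩)
      · simp [hf, hx, hy, e.injective.eq_iff]
      · simp [hf, hx]
    · refine Or.inr ((hTadj _ _).mpr ⟨?_, Or.inr ?_⟩)
      · simp [hf, hx, hy, e.injective.eq_iff]
      · simp [hf, hy]
    · refine Or.inl ?_
      simp only [hf, dif_neg hx, dif_neg hy]
      exact congrArg e (congrArg some (G.componentComplMk_eq_of_adj hx hy hxy))
  · -- cardinality of fibers
    intro w
    rcases hfib w with h | ⟨C, h⟩
    · rw [h, Nat.card_coe_set_eq, hK, Set.ncard_coe_finset, hBcard]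
    · rw [h, Nat.card_coe_set_eq]
      have hsub : (C : Set V) ⊆ Kᶜ := by
        intro v hv
        simp only [Set.mem_compl_iff]
        exact ComponentCompl.notMem_of_mem hv
      have h1 : (C : Set V).ncard ≤ (Kᶜ : Set V).ncard :=
        Set.ncard_le_ncard hsub (Set.toFinite _)
      have h2 : K.ncard + (Kᶜ : Set V).ncard = Nat.card V :=
        Set.ncard_add_ncard_compl K
      have h3 : K.ncard = (n + 1) / 2 := by
        rw [hK, Set.ncard_coe_finset, hBcard]
      have h4 : Nat.card V = n := by rw [Nat.card_eq_fintype_card]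
      omega
  · -- connectivity of fibers
    intro w
    rcases hfib w with h | ⟨C, h⟩
    · rw [h]
      exact hBconn
    · rw [h]
      exact my_componentCompl_supp_connected C
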